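/- Let X be a Priestley space and A(X) its lattice of clopen lower sets. The assignment C ↦ θ_C is a bijection from the set of closed subsets of X onto the set of all lattice congruences of A(X), and it is order-reversing in both directions: for closed subsets C, D of X, C ⊆ D if and only if θ_D ⊆ θ_C. In particular, it is an order isomorphism from the closed subsets of X ordered by reverse inclusion to the lattice of congruences of A(X) ordered by inclusion. -/
import Mathlib


/-- The clopen lower sets of a space with a preorder, as a subtype of `Set X`. -/
abbrev ClopLow (X : Type*) [TopologicalSpace X] [Preorder X] :=
  {a : Set X // IsClopen a ∧ IsLowerSet a}

/-- The clopen lower sets form a lattice under union and intersection. -/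
noncomputable instance ClopLow.instLattice {X : Type*} [TopologicalSpace X] [Preorder X] :
    Lattice (ClopLow X) :=
  Subtype.lattice (fun _ _ ha hb => ⟨ha.1.union hb.1, ha.2.union hb.2⟩)
    (fun _ _ ha hb => ⟨ha.1.inter hb.1, ha.2.inter hb.2⟩)

/-- A *lattice congruence*: an equivalence relation compatible with `⊔` and `⊓`. -/
def IsLatCong {X : Type*} [TopologicalSpace X] [Preorder X]
    (θ : Setoid (ClopLow X)) : Prop :=
  ∀ a b c d : ClopLow X, θ.r a b → θ.r c d → θ.r (a ⊔ c) (b ⊔ d) ∧ θ.r (a ⊓ c) (b ⊓ d)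

/-- For a subset `C` of `X`, the congruence `θ_C` on the lattice of clopen lower sets of
`X` identifying `a` and `b` iff `a ∩ C = b ∩ C`. -/
def thetaC {X : Type*} [TopologicalSpace X] [Preorder X] (C : Set X) :
    Setoid (ClopLow X) where
  r a b := a.1 ∩ C = b.1 ∩ C
  iseqv := ⟨fun _ => rfl, fun h => h.symm, fun h₁ h₂ => h₁.trans h₂⟩

section Aux

variable {X : Type*} [TopologicalSpace X] [Preorder X]

lemma ClopLow.coe_sup (a b : ClopLow X) : (a ⊔ b).1 = a.1 ∪ b.1 := rfl
lemma ClopLow.coe_inf (a b : ClopLow X) : (a ⊓ b).1 = a.1 ∩ b.1 := rfl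

end Aux

section Main

variable {X : Type*} [TopologicalSpace X] [CompactSpace X] [PartialOrder X] [PriestleySpace X]

/-- Separation lemma: for `C` closed and `x ∉ C` there are clopen lower sets agreeing
on `C` but differing at `x`. -/
lemma sep_clopLow {C : Set X} (hC : IsClosed C) {x : X} (hx : x ∉ C) :
    ∃ a b : ClopLow X, a.1 ∩ C = b.1 ∩ C ∧ x ∈ b.1 ∧ x ∉ a.1 := by
  have key : ∀ y : C, ∃ V W : Set X, IsClopen V ∧ IsUpperSet V ∧ IsClopen W ∧ IsLowerSet W ∧
      x ∈ V ∧ x ∈ W ∧ (y : X) ∉ V ∩ W := by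
    rintro ⟨y, hy⟩
    by_cases hle : x ≤ y
    · have hne : ¬(y : X) ≤ x := fun h => hx (le_antisymm hle h ▸ hy)
      obtain ⟨U, hU, hUup, hyU, hxU⟩ := exists_isClopen_upper_of_not_le hne
      exact ⟨Set.univ, Uᶜ, isClopen_univ, isUpperSet_univ, hU.compl, hUup.compl,
        trivial, hxU, fun h => h.2 hyU⟩
    · obtain ⟨U, hU, hUup, hxU, hyU⟩ := exists_isClopen_upper_of_not_le hle
      exact ⟨U, Set.univ, hU, hUup, isClopen_univ, isLowerSet_univ, hxU, trivial,
        fun h => hyU h.1⟩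
  choose V W hV hVu hW hWl hxV hxW hyVW using key
  have hCc : IsCompact C := hC.isCompact
  obtain ⟨t, ht⟩ := hCc.elim_finite_subcover (fun y : C => (V y ∩ W y)ᶜ)
    (fun y => (((hV y).inter (hW y)).compl).isOpen)
    (fun z hz => Set.mem_iUnion.2 ⟨⟨z, hz⟩, hyVW ⟨z, hz⟩⟩)
  set Vt : Set X := ⋂ y ∈ t, V y with hVt
  set Wt : Set X := ⋂ y ∈ t, W y with hWt
  have hVtc : IsClopen Vt := isClopen_biInter_finset fun y _ => hV y
  have hWtc : IsClopen Wt := isClopen_biInter_finset fun y _ => hW y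
  have hVtu : IsUpperSet Vt := isUpperSet_iInter₂ fun y _ => hVu y
  have hWtl : IsLowerSet Wt := isLowerSet_iInter₂ fun y _ => hWl y
  have hxVt : x ∈ Vt := Set.mem_iInter₂.2 fun y _ => hxV y
  have hxWt : x ∈ Wt := Set.mem_iInter₂.2 fun y _ => hxW y
  have hdisj : ∀ z ∈ C, z ∉ Vt ∩ Wt := by
    intro z hz hmem
    obtain ⟨y, hyt, hzy⟩ := Set.mem_iUnion₂.1 (ht hz)
    exact hzy ⟨Set.mem_iInter₂.1 hmem.1 y hyt, Set.mem_iInter₂.1 hmem.2 y hyt⟩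
  refine ⟨⟨Wt ∩ Vtᶜ, (hWtc.inter hVtc.compl), hWtl.inter (hVtu.compl)⟩,
    ⟨Wt, hWtc, hWtl⟩, ?_, hxWt, fun h => h.2 hxVt⟩
  ext z
  simp only [Set.mem_inter_iff, Set.mem_compl_iff]
  constructor
  · rintro ⟨⟨h1, _⟩, h3⟩; exact ⟨h1, h3⟩
  · rintro ⟨h1, h3⟩
    exact ⟨⟨h1, fun hv => hdisj z h3 ⟨hv, h1⟩⟩, h3⟩

/-- The closed set associated to a congruence. -/
def congSet (θ : Setoid (ClopLow X)) : Set X :=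
  {x | ∀ a b : ClopLow X, θ.r a b → (x ∈ a.1 ↔ x ∈ b.1)}

lemma isClosed_congSet (θ : Setoid (ClopLow X)) : IsClosed (congSet θ) := by
  have : congSet θ = ⋂ (a : ClopLow X) (b : ClopLow X) (_ : θ.r a b),
      ((a.1 ∩ b.1) ∪ (a.1ᶜ ∩ b.1ᶜ)) := by
    ext x
    simp only [congSet, Set.mem_setOf_eq, Set.mem_iInter, Set.mem_union, Set.mem_inter_iff,
      Set.mem_compl_iff]
    constructor
    · intro h a b hab
      rcases Classical.em (x ∈ a.1) with hxa | hxa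
      · exact Or.inl ⟨hxa, (h a b hab).1 hxa⟩
      · exact Or.inr ⟨hxa, fun hxb => hxa ((h a b hab).2 hxb)⟩
    · intro h a b hab
      rcases h a b hab with ⟨h1, h2⟩ | ⟨h1, h2⟩
      · exact ⟨fun _ => h2, fun _ => h1⟩
      · exact ⟨fun hxa => absurd hxa h1, fun hxb => absurd hxb h2⟩
  rw [this]
  exact isClosed_iInter fun a => isClosed_iInter fun b => isClosed_iInter fun _ =>
    ((a.2.1.inter b.2.1).union (a.2.1.compl.inter b.2.1.compl)).isClosed

/-- Covering lemma: if `a ≤ b` and `b \ a` is covered by finitely many differences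
`c i \ d i` of congruent pairs, then `a` and `b` are congruent. -/
lemma cover_cong {θ : Setoid (ClopLow X)} (hθ : IsLatCong θ) {ι : Type*}
    (s : Finset ι) (c d : ι → ClopLow X)
    (hcd : ∀ i ∈ s, θ.r (c i) (d i) ∧ (d i).1 ⊆ (c i).1) :
    ∀ a b : ClopLow X, a.1 ⊆ b.1 → (b.1 \ a.1 ⊆ ⋃ i ∈ s, ((c i).1 \ (d i).1)) → θ.r a b := by
  classical
  induction s using Finset.induction_on with
  | empty =>
    intro a b hab hcov
    have : a = b := Subtype.ext (Set.Subset.antisymm hab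
      (fun z hz => by_contra fun hz' => by simpa using hcov ⟨hz, hz'⟩))
    exact this ▸ θ.refl a
  | @insert i s his ih =>
    intro a b hab hcov
    have hi := hcd i (Finset.mem_insert_self i s)
    have hs : ∀ j ∈ s, θ.r (c j) (d j) ∧ (d j).1 ⊆ (c j).1 :=
      fun j hj => hcd j (Finset.mem_insert_of_mem hj)
    set b' : ClopLow X := b ⊓ (d i ⊔ a) with hb'
    set b'' : ClopLow X := b ⊓ (c i ⊔ a) with hb''
    -- θ b'' b'
    have h1 : θ.r b'' b' := by
      have hsup := (hθ (c i) (d i) a a hi.1 (θ.refl a)).1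
      exact (hθ b b (c i ⊔ a) (d i ⊔ a) (θ.refl b) hsup).2
    -- θ a b'
    have h2 : θ.r a b' := by
      apply ih (fun j hj => hs j hj) a b'
      · intro z hz
        exact ⟨hab hz, Or.inr hz⟩
      · intro z hz
        have hzb : z ∈ b.1 \ a.1 := ⟨hz.1.1, hz.2⟩
        have hzd : z ∈ (d i).1 := by
          rcases hz.1.2 with h | h
          · exact h
          · exact absurd h hz.2
        obtain ⟨j, hj, hzj⟩ := Set.mem_iUnion₂.1 (hcov hzb)
        rcases Finset.mem_insert.1 hj with rfl | hj'
        · exact absurd hzd hzj.2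
        · exact Set.mem_iUnion₂.2 ⟨j, hj', hzj⟩
    -- θ b'' b
    have h3 : θ.r b'' b := by
      apply ih (fun j hj => hs j hj) b'' b
      · intro z hz; exact hz.1
      · intro z hz
        have hza : z ∉ a.1 := fun h => hz.2 ⟨hz.1, Or.inr h⟩
        have hzc : z ∉ (c i).1 := fun h => hz.2 ⟨hz.1, Or.inl h⟩
        obtain ⟨j, hj, hzj⟩ := Set.mem_iUnion₂.1 (hcov ⟨hz.1, hza⟩)
        rcases Finset.mem_insert.1 hj with rfl | hj'
        · exact absurd hzj.1 hzc
        · exact Set.mem_iUnion₂.2 ⟨j, hj', hzj⟩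
    exact θ.trans h2 (θ.trans (θ.symm h1) h3)

/-- If `a ≤ b` and `b ∩ congSet θ ⊆ a`, then `θ a b`. -/
lemma le_cong {θ : Setoid (ClopLow X)} (hθ : IsLatCong θ) {a b : ClopLow X}
    (hab : a.1 ⊆ b.1) (h : b.1 ∩ congSet θ ⊆ a.1) : θ.r a b := by
  classical
  have key : ∀ x : (b.1 \ a.1 : Set X), ∃ c d : ClopLow X,
      θ.r c d ∧ (d : ClopLow X).1 ⊆ c.1 ∧ (x : X) ∈ c.1 \ d.1 := by
    rintro ⟨x, hxb, hxa⟩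
    have hxC : x ∉ congSet θ := fun hmem => hxa (h ⟨hxb, hmem⟩)
    simp only [congSet, Set.mem_setOf_eq, not_forall] at hxC
    obtain ⟨c, d, hcd, hne⟩ := hxC
    rcases Classical.em (x ∈ c.1) with hxc | hxc
    · have hxd : x ∉ d.1 := fun hxd => hne ⟨fun _ => hxd, fun _ => hxc⟩
      refine ⟨c ⊔ d, d, ?_, ?_, Or.inl hxc, hxd⟩
      · have := (hθ c d d d hcd (θ.refl d)).1
        rwa [sup_idem] at this
      · exact fun z hz => Or.inr hz
    · have hxd : x ∈ d.1 := by
        by_contra hxd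
        exact hne ⟨fun hc => absurd hc hxc, fun hd => absurd hd hxd⟩
      refine ⟨d ⊔ c, c, ?_, ?_, Or.inl hxd, hxc⟩
      · have := (hθ d c c c (θ.symm hcd) (θ.refl c)).1
        rwa [sup_idem] at this
      · exact fun z hz => Or.inr hz
  choose c d hcd hdc hmem using key
  have hcpt : IsCompact (b.1 \ a.1) :=
    ((b.2.1.isClosed).sdiff a.2.1.isOpen).isCompact
  obtain ⟨t, ht⟩ := hcpt.elim_finite_subcover (fun x => (c x).1 \ (d x).1)
    (fun x => (c x).2.1.isOpen.sdiff (d x).2.1.isClosed)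
    (fun z hz => Set.mem_iUnion.2 ⟨⟨z, hz⟩, hmem ⟨z, hz⟩⟩)
  exact cover_cong hθ t c d (fun i _ => ⟨hcd i, hdc i⟩) a b hab ht

lemma thetaC_congSet {θ : Setoid (ClopLow X)} (hθ : IsLatCong θ) :
    thetaC (congSet θ) = θ := by
  apply Setoid.ext
  intro a b
  constructor
  · intro hab
    -- hab : a.1 ∩ congSet θ = b.1 ∩ congSet θ
    have h1 : θ.r a (a ⊔ b) := by
      apply le_cong hθ (a := a) (b := a ⊔ b) (fun z hz => Set.mem_union_left _ hz)
      intro z hz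
      rcases hz.1 with h | h
      · exact h
      · exact (Set.ext_iff.1 hab.symm z).1 ⟨h, hz.2⟩ |>.1
    have h2 : θ.r b (a ⊔ b) := by
      apply le_cong hθ (a := b) (b := a ⊔ b) (fun z hz => Set.mem_union_right _ hz)
      intro z hz
      rcases hz.1 with h | h
      · exact (Set.ext_iff.1 hab z).1 ⟨h, hz.2⟩ |>.1
      · exact h
    exact θ.trans h1 (θ.symm h2)
  · intro hab
    show a.1 ∩ congSet θ = b.1 ∩ congSet θ
    ext z
    simp only [Set.mem_inter_iff]
    exact ⟨fun ⟨h1, h2⟩ => ⟨(h2 a b hab).1 h1, h2⟩, fun ⟨h1, h2⟩ => ⟨(h2 a b hab).2 h1, h2⟩⟩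

end Main

/-- Priestley duality for congruences: on a Priestley space `X`, the assignment
`C ↦ θ_C` sends closed sets to lattice congruences of the lattice of clopen lower sets,
is injective on closed sets, hits exactly the lattice congruences, and is
order-reversing in both directions: `C ⊆ D ↔ θ_D ⊆ θ_C`. -/
theorem stmt13 {X : Type*} [TopologicalSpace X] [CompactSpace X] [PartialOrder X]
    [PriestleySpace X] :
    (∀ C : Set X, IsClosed C → IsLatCong (thetaC C)) ∧
    (∀ C D : Set X, IsClosed C → IsClosed D → thetaC C = thetaC D → C = D) ∧
    (∀ θ : Setoid (ClopLow X), IsLatCong θ → ∃ C : Set X, IsClosed C ∧ thetaC C = θ) ∧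
    (∀ C D : Set X, IsClosed C → IsClosed D →
      (C ⊆ D ↔ ∀ a b : ClopLow X, (thetaC D).r a b → (thetaC C).r a b)) := by
  have hlatcong : ∀ C : Set X, IsLatCong (thetaC C) := by
    intro C a b c d hab hcd
    constructor
    · show (a.1 ∪ c.1) ∩ C = (b.1 ∪ d.1) ∩ C
      rw [Set.union_inter_distrib_right, Set.union_inter_distrib_right]
      rw [show a.1 ∩ C = b.1 ∩ C from hab, show c.1 ∩ C = d.1 ∩ C from hcd]
    · show (a.1 ∩ c.1) ∩ C = (b.1 ∩ d.1) ∩ C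
      have : ∀ u v : Set X, (u ∩ v) ∩ C = (u ∩ C) ∩ (v ∩ C) := by
        intro u v; ext z; simp only [Set.mem_inter_iff]; tauto
      rw [this, this, show a.1 ∩ C = b.1 ∩ C from hab, show c.1 ∩ C = d.1 ∩ C from hcd]
  have hmono : ∀ C D : Set X, IsClosed C → IsClosed D →
      (C ⊆ D ↔ ∀ a b : ClopLow X, (thetaC D).r a b → (thetaC C).r a b) := by
    intro C D hC hD
    constructor
    · intro hCD a b hab
      show a.1 ∩ C = b.1 ∩ C
      have : a.1 ∩ D = b.1 ∩ D := hab
      ext z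
      simp only [Set.mem_inter_iff]
      constructor
      · rintro ⟨h1, h2⟩
        exact ⟨((Set.ext_iff.1 this z).1 ⟨h1, hCD h2⟩).1, h2⟩
      · rintro ⟨h1, h2⟩
        exact ⟨((Set.ext_iff.1 this z).2 ⟨h1, hCD h2⟩).1, h2⟩
    · intro h z hz
      by_contra hzD
      obtain ⟨a, b, habD, hzb, hza⟩ := sep_clopLow hD hzD
      have habC : a.1 ∩ C = b.1 ∩ C := h a b habD
      exact hza ((Set.ext_iff.1 habC z).2 ⟨hzb, hz⟩).1
  refine ⟨fun C _ => hlatcong C, ?_, ?_, hmono⟩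
  · intro C D hC hD hEq
    apply Set.Subset.antisymm
    · exact (hmono C D hC hD).2 (fun a b hab => hEq ▸ hab)
    · exact (hmono D C hD hC).2 (fun a b hab => hEq ▸ hab)
  · intro θ hθ
    exact ⟨congSet θ, isClosed_congSet θ, thetaC_congSet hθ⟩
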